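/- Let M be a monoidal model category and let α : f_V → f_W and β : f_X → f_Y be morphisms in Arr(M). Suppose α is a cofibration and β is a cofibration (respectively, trivial cofibration) in the projective model structure on Arr(M). Then the 0-component ζ of the pushout product α □₂ β, namely the induced map ζ : (W₁⊗X₀ ⊔_{W₀⊗X₀} W₀⊗X₁) ⊔_{(V₁⊗X₀ ⊔_{V₀⊗X₀} V₀⊗X₁)} (V₁⊗Y₀ ⊔_{V₀⊗Y₀} V₀⊗Y₁) → W₁⊗Y₀ ⊔_{W₀⊗Y₀} W₀⊗Y₁, is a cofibration (respectively, trivial cofibration) in M. The same conclusion, with 'trivial' attached when α is a trivial cofibration, holds when α is a (trivial) cofibration and β is a cofibration. -/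

import Mathlib

set_option maxHeartbeats 1000000

open CategoryTheory Category Limits MonoidalCategory

universe v u

namespace ArrowPaper

variable {M : Type u} [Category.{v} M]

/-- `f` is a retract of `g` in the arrow category. -/
def IsRetractOf (f g : Arrow M) : Prop :=
  ∃ (i : f ⟶ g) (r : g ⟶ f), i ≫ r = 𝟙 f

/-- A (Quillen) model structure on a category: three classes of maps
(weak equivalences, cofibrations, fibrations) satisfying the two-out-of-three
axiom, closure under retracts, the lifting axioms, and the factorization axioms. -/
structure ModelStructure (M : Type u) [Category.{v} M] where
  /-- weak equivalences -/
  W : MorphismProperty M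
  /-- cofibrations -/
  Cof : MorphismProperty M
  /-- fibrations -/
  Fib : MorphismProperty M
  w_comp : ∀ {X Y Z : M} (f : X ⟶ Y) (g : Y ⟶ Z), W f → W g → W (f ≫ g)
  w_cancel_left : ∀ {X Y Z : M} (f : X ⟶ Y) (g : Y ⟶ Z), W f → W (f ≫ g) → W g
  w_cancel_right : ∀ {X Y Z : M} (f : X ⟶ Y) (g : Y ⟶ Z), W g → W (f ≫ g) → W f
  w_retract : ∀ (f g : Arrow M), IsRetractOf f g → W g.hom → W f.hom
  cof_retract : ∀ (f g : Arrow M), IsRetractOf f g → Cof g.hom → Cof f.hom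
  fib_retract : ∀ (f g : Arrow M), IsRetractOf f g → Fib g.hom → Fib f.hom
  lift_trivCof_fib : ∀ {A B X Y : M} (i : A ⟶ B) (p : X ⟶ Y),
    Cof i → W i → Fib p → HasLiftingProperty i p
  lift_cof_trivFib : ∀ {A B X Y : M} (i : A ⟶ B) (p : X ⟶ Y),
    Cof i → Fib p → W p → HasLiftingProperty i p
  factor_trivCof_fib : ∀ {X Y : M} (f : X ⟶ Y),
    ∃ (Z : M) (i : X ⟶ Z) (p : Z ⟶ Y), Cof i ∧ W i ∧ Fib p ∧ i ≫ p = f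
  factor_cof_trivFib : ∀ {X Y : M} (f : X ⟶ Y),
    ∃ (Z : M) (i : X ⟶ Z) (p : Z ⟶ Y), Cof i ∧ Fib p ∧ W p ∧ i ≫ p = f

section Projective

variable [HasPushouts M]

/-- The pushout corner map of a commutative square `α : f ⟶ g` in the arrow category:
the induced map `α₁ ⊛ g : X₁ ⊔_{X₀} Y₀ ⟶ Y₁`. -/
noncomputable def cornerMap {f g : Arrow M} (α : f ⟶ g) :
    pushout f.hom α.left ⟶ g.right :=
  pushout.desc α.right g.hom (Arrow.w α).symm

variable (S : ModelStructure M)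

/-- Projective weak equivalences in the arrow category: componentwise weak equivalences. -/
def ProjW : MorphismProperty (Arrow M) := fun _ _ α => S.W α.left ∧ S.W α.right

/-- Projective fibrations in the arrow category: componentwise fibrations. -/
def ProjFib : MorphismProperty (Arrow M) := fun _ _ α => S.Fib α.left ∧ S.Fib α.right

/-- Projective cofibrations in the arrow category: `α₀` and the pushout corner map
`α₁ ⊛ g` are cofibrations. -/
def ProjCof : MorphismProperty (Arrow M) := fun _ _ α =>
  S.Cof α.left ∧ S.Cof (cornerMap α)

/-- Projective trivial cofibrations in the arrow category: `α₀` and the pushout corner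
map `α₁ ⊛ g` are trivial cofibrations. -/
def ProjTrivCof : MorphismProperty (Arrow M) := fun _ _ α =>
  (S.Cof α.left ∧ S.W α.left) ∧ (S.Cof (cornerMap α) ∧ S.W (cornerMap α))

end Projective

section Monoidal

variable [MonoidalCategory M] [HasPushouts M]

/-- The domain `(X₀ ⊗ Y₁) ⊔_{X₀ ⊗ Y₀} (X₁ ⊗ Y₀)` of the pushout product of two arrows. -/
noncomputable abbrev ppDom (f g : Arrow M) : M :=
  pushout (f.left ◁ g.hom) (f.hom ▷ g.left)

/-- The pushout product `f □ g : (X₀ ⊗ Y₁) ⊔_{X₀ ⊗ Y₀} (X₁ ⊗ Y₀) ⟶ X₁ ⊗ Y₁`. -/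
noncomputable def ppMap (f g : Arrow M) : ppDom f g ⟶ f.right ⊗ g.right :=
  pushout.desc (f.hom ▷ g.right) (f.right ◁ g.hom) (whisker_exchange f.hom g.hom)

/-- The pushout product of two arrows, as an object of the arrow category. -/
noncomputable def ppObj (f g : Arrow M) : Arrow M := Arrow.mk (ppMap f g)

/-- The pushout product axiom for a model structure on a monoidal category:
the pushout product of two cofibrations is a cofibration, which is moreover a weak
equivalence if either of the two cofibrations is a weak equivalence. -/
def PushoutProductAxiom (S : ModelStructure M) : Prop :=
  ∀ (f g : Arrow M), S.Cof f.hom → S.Cof g.hom →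
    S.Cof (ppMap f g) ∧ (S.W f.hom → S.W (ppMap f g)) ∧ (S.W g.hom → S.W (ppMap f g))

end Monoidal

section PP2

variable [MonoidalCategory M] [HasPushouts M]

/-- Functoriality of the pushout product domain in the first variable. -/
noncomputable def ppDomMapL {fV fW : Arrow M} (α : fV ⟶ fW) (g : Arrow M) :
    ppDom fV g ⟶ ppDom fW g :=
  pushout.map _ _ _ _ (α.left ▷ g.right) (α.right ▷ g.left) (α.left ▷ g.left)
    (whisker_exchange α.left g.hom)
    (by rw [← comp_whiskerRight, ← comp_whiskerRight, Arrow.w])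

/-- Functoriality of the pushout product domain in the second variable. -/
noncomputable def ppDomMapR (f : Arrow M) {fX fY : Arrow M} (β : fX ⟶ fY) :
    ppDom f fX ⟶ ppDom f fY :=
  pushout.map _ _ _ _ (f.left ◁ β.right) (f.right ◁ β.left) (f.left ◁ β.left)
    (by rw [← MonoidalCategory.whiskerLeft_comp, ← MonoidalCategory.whiskerLeft_comp, Arrow.w])
    (whisker_exchange f.hom β.left).symm

variable {fV fW fX fY : Arrow M} (α : fV ⟶ fW) (β : fX ⟶ fY)

/-- The object `Z`, i.e. the `0`-component of the domain of `α □₂ β`. -/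
noncomputable abbrev Zobj : M :=
  pushout (ppDomMapR fV β) (ppDomMapL α fX)

/-- The map `ζ`, i.e. the `0`-component of `α □₂ β`. -/
noncomputable def zeta : Zobj α β ⟶ ppDom fW fY :=
  pushout.desc (ppDomMapL α fY) (ppDomMapR fW β) (by
    apply pushout.hom_ext <;>
      (try simp only [ppMap, ppDomMapL, ppDomMapR, pushout.map, pushout.inl_desc_assoc,
        pushout.inr_desc_assoc, pushout.inl_desc, pushout.inr_desc, Category.assoc]) <;>
      simp [ppDomMapL, ppDomMapR, whisker_exchange, whisker_exchange_assoc,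
        ← MonoidalCategory.whiskerLeft_comp, ← comp_whiskerRight, Arrow.w])

/-- The arrow `(f_W □ f_X) ⊔_{f_V □ f_X} (f_V □ f_Y)`, i.e. the domain object of
`α □₂ β` as an object of the arrow category; its `0`-component (domain) is `Z` and its
`1`-component (codomain) is `W₁⊗X₁ ⊔_{V₁⊗X₁} V₁⊗Y₁`. -/
noncomputable def Qmap : Zobj α β ⟶ ppDom (Arrow.mk α.right) (Arrow.mk β.right) :=
  pushout.map _ _ _ _ (ppMap fV fY) (ppMap fW fX) (ppMap fV fX)
    (by
      apply pushout.hom_ext <;>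
        (try simp only [ppMap, ppDomMapL, ppDomMapR, pushout.map, pushout.inl_desc_assoc,
        pushout.inr_desc_assoc, pushout.inl_desc, pushout.inr_desc, Category.assoc]) <;>
      simp [ppDomMapR, ppMap, whisker_exchange, whisker_exchange_assoc,
          ← MonoidalCategory.whiskerLeft_comp, ← comp_whiskerRight, Arrow.w])
    (by
      apply pushout.hom_ext <;>
        (try simp only [ppMap, ppDomMapL, ppDomMapR, pushout.map, pushout.inl_desc_assoc,
        pushout.inr_desc_assoc, pushout.inl_desc, pushout.inr_desc, Category.assoc]) <;>
      simp [ppDomMapL, ppMap, whisker_exchange, whisker_exchange_assoc,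
          ← MonoidalCategory.whiskerLeft_comp, ← comp_whiskerRight, Arrow.w])

/-- The pushout product `α □₂ β` of two composable squares, i.e. the morphism
`(f_W □ f_X) ⊔_{f_V □ f_X} (f_V □ f_Y) ⟶ f_W □ f_Y` in the arrow category, whose
`0`-component is `ζ` and whose `1`-component is `α₁ □ β₁`. -/
noncomputable def pp2 : Arrow.mk (Qmap α β) ⟶ Arrow.mk (ppMap fW fY) :=
  Arrow.homMk (u := zeta α β) (v := ppMap (Arrow.mk α.right) (Arrow.mk β.right)) (by
    apply pushout.hom_ext <;> apply pushout.hom_ext <;>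
      (try simp only [Arrow.mk_hom, Arrow.mk_left, Arrow.mk_right, zeta, Qmap, pushout.map,
        pushout.inl_desc_assoc, pushout.inr_desc_assoc, Category.assoc]) <;>
      (try simp only [ppMap, ppDomMapL, ppDomMapR, pushout.map, pushout.inl_desc_assoc,
        pushout.inr_desc_assoc, pushout.inl_desc, pushout.inr_desc, Category.assoc]) <;>
      simp [zeta, Qmap, ppMap, ppDomMapL, ppDomMapR, whisker_exchange, whisker_exchange_assoc,
        ← MonoidalCategory.whiskerLeft_comp, ← comp_whiskerRight, Arrow.w])

end PP2

/-!
`ζ` has the left lifting property against a map `p` as soon as the three pushout products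
`α₀ □ β₀`, `α₀ □ (β₁ ⊛ f_Y)` and `(α₁ ⊛ f_W) □ β₀` have it: a lifting problem for `ζ` is
solved on `W₀ ⊗ Y₀` using the first, and the solution is then extended to `W₀ ⊗ Y₁` and to
`W₁ ⊗ Y₀` using the other two. The extension steps need `W₀ ⊗ -` and `- ⊗ Y₀` to preserve
pushouts, which holds in a closed symmetric monoidal category. By the pushout product axiom
these three maps lift against trivial fibrations (against all fibrations when `α` or `β` is
trivial), and the retract argument turns the lifting property of `ζ` back into (trivial)
cofibrancy.
-/

theorem isRetractOf_of_hasLiftingProperty {A B Z : M} {f : A ⟶ B} {i : A ⟶ Z} {q : Z ⟶ B}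
    (fac : i ≫ q = f) [HasLiftingProperty f q] : IsRetractOf (Arrow.mk f) (Arrow.mk i) :=
  let h := RetractArrow.ofLeftLiftingProperty fac
  ⟨h.i, h.r, h.retract⟩

namespace ModelStructure

variable (S : ModelStructure M)

theorem cof_of_llp {A B : M} {f : A ⟶ B} (hf : (S.Fib ⊓ S.W).llp f) : S.Cof f := by
  obtain ⟨Z, i, q, hi, hq, hwq, fac⟩ := S.factor_cof_trivFib f
  have := hf q ⟨hq, hwq⟩
  exact S.cof_retract _ _ (isRetractOf_of_hasLiftingProperty fac) hi

theorem cof_and_w_of_llp {A B : M} {f : A ⟶ B} (hf : S.Fib.llp f) : S.Cof f ∧ S.W f := by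
  obtain ⟨Z, i, q, hi, hwi, hq, fac⟩ := S.factor_trivCof_fib f
  have := hf q hq
  have hr := isRetractOf_of_hasLiftingProperty fac
  exact ⟨S.cof_retract _ _ hr hi, S.w_retract _ _ hr hwi⟩

end ModelStructure

section PushoutProduct

variable [MonoidalCategory M] [HasPushouts M]

namespace PushoutProductAxiom

variable {S : ModelStructure M} (hS : PushoutProductAxiom S) {f g : Arrow M}
include hS

theorem llp_trivFib (hf : S.Cof f.hom) (hg : S.Cof g.hom) : (S.Fib ⊓ S.W).llp (ppMap f g) :=
  fun _ _ p hp => S.lift_cof_trivFib _ p (hS f g hf hg).1 hp.1 hp.2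

theorem llp_fib_of_w_left (hf : S.Cof f.hom) (hwf : S.W f.hom) (hg : S.Cof g.hom) :
    S.Fib.llp (ppMap f g) :=
  fun _ _ p hp => S.lift_trivCof_fib _ p (hS f g hf hg).1 ((hS f g hf hg).2.1 hwf) hp

theorem llp_fib_of_w_right (hf : S.Cof f.hom) (hg : S.Cof g.hom) (hwg : S.W g.hom) :
    S.Fib.llp (ppMap f g) :=
  fun _ _ p hp => S.lift_trivCof_fib _ p (hS f g hf hg).1 ((hS f g hf hg).2.2 hwg) hp

end PushoutProductAxiom

theorem exists_lift_ppMap {A₀ A₁ B₀ B₁ : M} (f : A₀ ⟶ A₁) (g : B₀ ⟶ B₁) {P Q : M} (p : P ⟶ Q)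
    [HasLiftingProperty (ppMap (Arrow.mk f) (Arrow.mk g)) p]
    (a : A₀ ⊗ B₁ ⟶ P) (b : A₁ ⊗ B₀ ⟶ P) (c : A₁ ⊗ B₁ ⟶ Q)
    (hab : (A₀ ◁ g) ≫ a = (f ▷ B₀) ≫ b) (ha : a ≫ p = (f ▷ B₁) ≫ c) (hb : b ≫ p = (A₁ ◁ g) ≫ c) :
    ∃ l : A₁ ⊗ B₁ ⟶ P, (f ▷ B₁) ≫ l = a ∧ (A₁ ◁ g) ≫ l = b ∧ l ≫ p = c := by
  have sq : CommSq (pushout.desc a b hab) (ppMap (Arrow.mk f) (Arrow.mk g)) p c := by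
    constructor
    apply pushout.hom_ext
    · simp only [ppMap, pushout.inl_desc_assoc]
      exact ha
    · simp only [ppMap, pushout.inr_desc_assoc]
      exact hb
  refine ⟨sq.lift, ?_, ?_, sq.fac_right⟩
  · simpa only [ppMap, Arrow.mk_hom, Arrow.mk_right, pushout.inl_desc_assoc, pushout.inl_desc]
      using pushout.inl _ _ ≫= sq.fac_left
  · simpa only [ppMap, Arrow.mk_hom, Arrow.mk_right, pushout.inr_desc_assoc, pushout.inr_desc]
      using pushout.inr _ _ ≫= sq.fac_left

variable [MonoidalClosed M]

theorem isPushout_whiskerLeft (A : M) {X Y Z : M} (f : X ⟶ Y) (g : X ⟶ Z) :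
    IsPushout (A ◁ f) (A ◁ g) (A ◁ pushout.inl f g) (A ◁ pushout.inr f g) := by
  simpa using (IsPushout.of_hasPushout f g).map (tensorLeft A)

theorem exists_lift_ppMap_cornerMap_right {A₀ A₁ : M} (f : A₀ ⟶ A₁) {g g' : Arrow M}
    (β : g ⟶ g') {P Q : M} (p : P ⟶ Q)
    [HasLiftingProperty (ppMap (Arrow.mk f) (Arrow.mk (cornerMap β))) p]
    (a : A₀ ⊗ g'.right ⟶ P) (c : A₁ ⊗ g.right ⟶ P) (d : A₁ ⊗ g'.left ⟶ P)
    (e : A₁ ⊗ g'.right ⟶ Q)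
    (hac : (A₀ ◁ β.right) ≫ a = (f ▷ g.right) ≫ c) (had : (A₀ ◁ g'.hom) ≫ a = (f ▷ g'.left) ≫ d)
    (hcd : (A₁ ◁ g.hom) ≫ c = (A₁ ◁ β.left) ≫ d)
    (ha : a ≫ p = (f ▷ g'.right) ≫ e) (hc : c ≫ p = (A₁ ◁ β.right) ≫ e)
    (hd : d ≫ p = (A₁ ◁ g'.hom) ≫ e) :
    ∃ l : A₁ ⊗ g'.right ⟶ P, (f ▷ g'.right) ≫ l = a ∧
      (A₁ ◁ β.right) ≫ l = c ∧ (A₁ ◁ g'.hom) ≫ l = d ∧ l ≫ p = e := by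
  have hpo := isPushout_whiskerLeft A₁ g.hom β.left
  obtain ⟨l, hla, hlcd, hlp⟩ := exists_lift_ppMap f (cornerMap β) p a (hpo.desc c d hcd) e
    (by
      apply (isPushout_whiskerLeft A₀ g.hom β.left).hom_ext
      · rw [← MonoidalCategory.whiskerLeft_comp_assoc, whisker_exchange_assoc, hpo.inl_desc]
        simpa only [cornerMap, pushout.inl_desc] using hac
      · rw [← MonoidalCategory.whiskerLeft_comp_assoc, whisker_exchange_assoc, hpo.inr_desc]
        simpa only [cornerMap, pushout.inr_desc] using had)
    ha
    (by
      apply hpo.hom_ext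
      · rw [hpo.inl_desc_assoc, ← MonoidalCategory.whiskerLeft_comp_assoc]
        simpa only [cornerMap, pushout.inl_desc] using hc
      · rw [hpo.inr_desc_assoc, ← MonoidalCategory.whiskerLeft_comp_assoc]
        simpa only [cornerMap, pushout.inr_desc] using hd)
  refine ⟨l, hla, ?_, ?_, hlp⟩
  · have h := (A₁ ◁ pushout.inl _ _) ≫= hlcd
    rw [← MonoidalCategory.whiskerLeft_comp_assoc, hpo.inl_desc] at h
    simpa only [cornerMap, pushout.inl_desc] using h
  · have h := (A₁ ◁ pushout.inr _ _) ≫= hlcd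
    rw [← MonoidalCategory.whiskerLeft_comp_assoc, hpo.inr_desc] at h
    simpa only [cornerMap, pushout.inr_desc] using h

variable [BraidedCategory M]

theorem isPushout_whiskerRight {X Y Z : M} (f : X ⟶ Y) (g : X ⟶ Z) (A : M) :
    IsPushout (f ▷ A) (g ▷ A) (pushout.inl f g ▷ A) (pushout.inr f g ▷ A) := by
  simpa using (IsPushout.of_hasPushout f g).map (tensorRight A)

theorem exists_lift_ppMap_cornerMap_left {f f' : Arrow M} (α : f ⟶ f') {B₀ B₁ : M}
    (g : B₀ ⟶ B₁) {P Q : M} (p : P ⟶ Q)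
    [HasLiftingProperty (ppMap (Arrow.mk (cornerMap α)) (Arrow.mk g)) p]
    (c : f.right ⊗ B₁ ⟶ P) (d : f'.left ⊗ B₁ ⟶ P) (b : f'.right ⊗ B₀ ⟶ P)
    (e : f'.right ⊗ B₁ ⟶ Q)
    (hcd : (f.hom ▷ B₁) ≫ c = (α.left ▷ B₁) ≫ d) (hcb : (f.right ◁ g) ≫ c = (α.right ▷ B₀) ≫ b)
    (hdb : (f'.left ◁ g) ≫ d = (f'.hom ▷ B₀) ≫ b)
    (hc : c ≫ p = (α.right ▷ B₁) ≫ e) (hd : d ≫ p = (f'.hom ▷ B₁) ≫ e)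
    (hb : b ≫ p = (f'.right ◁ g) ≫ e) :
    ∃ l : f'.right ⊗ B₁ ⟶ P, (α.right ▷ B₁) ≫ l = c ∧
      (f'.hom ▷ B₁) ≫ l = d ∧ (f'.right ◁ g) ≫ l = b ∧ l ≫ p = e := by
  have hpo := isPushout_whiskerRight f.hom α.left B₁
  obtain ⟨l, hlcd, hlb, hlp⟩ := exists_lift_ppMap (cornerMap α) g p (hpo.desc c d hcd) b e
    (by
      apply (isPushout_whiskerRight f.hom α.left B₀).hom_ext
      · rw [← whisker_exchange_assoc, hpo.inl_desc, ← comp_whiskerRight_assoc]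
        simpa only [cornerMap, pushout.inl_desc] using hcb
      · rw [← whisker_exchange_assoc, hpo.inr_desc, ← comp_whiskerRight_assoc]
        simpa only [cornerMap, pushout.inr_desc] using hdb)
    (by
      apply hpo.hom_ext
      · rw [hpo.inl_desc_assoc, ← comp_whiskerRight_assoc]
        simpa only [cornerMap, pushout.inl_desc] using hc
      · rw [hpo.inr_desc_assoc, ← comp_whiskerRight_assoc]
        simpa only [cornerMap, pushout.inr_desc] using hd)
    hb
  refine ⟨l, ?_, ?_, hlb, hlp⟩
  · have h := (pushout.inl _ _ ▷ B₁) ≫= hlcd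
    rw [← comp_whiskerRight_assoc, hpo.inl_desc] at h
    simpa only [cornerMap, pushout.inl_desc] using h
  · have h := (pushout.inr _ _ ▷ B₁) ≫= hlcd
    rw [← comp_whiskerRight_assoc, hpo.inr_desc] at h
    simpa only [cornerMap, pushout.inr_desc] using h

variable {fV fW fX fY : Arrow M} (α : fV ⟶ fW) (β : fX ⟶ fY) {P Q : M} (p : P ⟶ Q)
  [HasLiftingProperty (ppMap (Arrow.mk α.left) (Arrow.mk β.left)) p]
  [HasLiftingProperty (ppMap (Arrow.mk α.left) (Arrow.mk (cornerMap β))) p]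
  [HasLiftingProperty (ppMap (Arrow.mk (cornerMap α)) (Arrow.mk β.left)) p]

/-- `a`, `b`, `c`, `d` are the restrictions of a map `Zobj α β ⟶ P` to `V₀ ⊗ Y₁`, `V₁ ⊗ Y₀`,
`W₀ ⊗ X₁`, `W₁ ⊗ X₀`, and `e`, `e'` those of a map `ppDom fW fY ⟶ Q` to `W₀ ⊗ Y₁`, `W₁ ⊗ Y₀`;
the lift is likewise produced by its restrictions `l₀`, `l₁`. -/
theorem exists_lift_zeta_components
    (a : fV.left ⊗ fY.right ⟶ P) (b : fV.right ⊗ fY.left ⟶ P)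
    (c : fW.left ⊗ fX.right ⟶ P) (d : fW.right ⊗ fX.left ⟶ P)
    (e : fW.left ⊗ fY.right ⟶ Q) (e' : fW.right ⊗ fY.left ⟶ Q)
    (hab : (fV.left ◁ fY.hom) ≫ a = (fV.hom ▷ fY.left) ≫ b)
    (hcd : (fW.left ◁ fX.hom) ≫ c = (fW.hom ▷ fX.left) ≫ d)
    (hee' : (fW.left ◁ fY.hom) ≫ e = (fW.hom ▷ fY.left) ≫ e')
    (hac : (fV.left ◁ β.right) ≫ a = (α.left ▷ fX.right) ≫ c)
    (hbd : (fV.right ◁ β.left) ≫ b = (α.right ▷ fX.left) ≫ d)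
    (ha : a ≫ p = (α.left ▷ fY.right) ≫ e) (hb : b ≫ p = (α.right ▷ fY.left) ≫ e')
    (hc : c ≫ p = (fW.left ◁ β.right) ≫ e) (hd : d ≫ p = (fW.right ◁ β.left) ≫ e') :
    ∃ (l₀ : fW.left ⊗ fY.right ⟶ P) (l₁ : fW.right ⊗ fY.left ⟶ P),
      (fW.left ◁ fY.hom) ≫ l₀ = (fW.hom ▷ fY.left) ≫ l₁ ∧
      (α.left ▷ fY.right) ≫ l₀ = a ∧ (fW.left ◁ β.right) ≫ l₀ = c ∧
      (α.right ▷ fY.left) ≫ l₁ = b ∧ (fW.right ◁ β.left) ≫ l₁ = d ∧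
      l₀ ≫ p = e ∧ l₁ ≫ p = e' := by
  obtain ⟨l, hla, hlc, hlp⟩ := exists_lift_ppMap α.left β.left p
    ((fV.left ◁ fY.hom) ≫ a) ((fW.left ◁ fX.hom) ≫ c) ((fW.left ◁ fY.hom) ≫ e)
    (by
      rw [← MonoidalCategory.whiskerLeft_comp_assoc, Arrow.w β,
        MonoidalCategory.whiskerLeft_comp_assoc, hac, whisker_exchange_assoc])
    (by rw [Category.assoc, ha, whisker_exchange_assoc])
    (by
      rw [Category.assoc, hc, ← MonoidalCategory.whiskerLeft_comp_assoc,
        ← MonoidalCategory.whiskerLeft_comp_assoc, Arrow.w β])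
  obtain ⟨l₀, hl₀a, hl₀c, hl₀l, hl₀p⟩ := exists_lift_ppMap_cornerMap_right α.left β p
    a c l e hac hla.symm hlc.symm ha hc hlp
  obtain ⟨l₁, hl₁b, hl₁l, hl₁d, hl₁p⟩ := exists_lift_ppMap_cornerMap_left α β.left p
    b l d e' (by rw [hla, hab]) hbd (by rw [hlc, hcd]) hb (by rw [hlp, hee']) hd
  exact ⟨l₀, l₁, by rw [hl₀l, hl₁l], hl₀a, hl₀c, hl₁b, hl₁d, hl₀p, hl₁p⟩

theorem zeta_hasLiftingProperty : HasLiftingProperty (zeta α β) p := by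
  refine ⟨fun {u v} sq => ?_⟩
  have hV : pushout.inl _ _ ≫ u ≫ p = ppDomMapL α fY ≫ v := by
    simpa only [zeta, pushout.inl_desc_assoc] using pushout.inl _ _ ≫= sq.w
  have hW : pushout.inr _ _ ≫ u ≫ p = ppDomMapR fW β ≫ v := by
    simpa only [zeta, pushout.inr_desc_assoc] using pushout.inr _ _ ≫= sq.w
  obtain ⟨l₀, l₁, hl, hl₀a, hl₀c, hl₁b, hl₁d, hl₀p, hl₁p⟩ := exists_lift_zeta_components α β p
    (pushout.inl _ _ ≫ pushout.inl _ _ ≫ u) (pushout.inr _ _ ≫ pushout.inl _ _ ≫ u)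
    (pushout.inl _ _ ≫ pushout.inr _ _ ≫ u) (pushout.inr _ _ ≫ pushout.inr _ _ ≫ u)
    (pushout.inl _ _ ≫ v) (pushout.inr _ _ ≫ v)
    (pushout.condition_assoc _) (pushout.condition_assoc _) (pushout.condition_assoc _)
    (by simpa only [ppDomMapR, ppDomMapL, pushout.map, pushout.inl_desc_assoc, Category.assoc]
      using pushout.inl _ _ ≫= pushout.condition_assoc u)
    (by simpa only [ppDomMapR, ppDomMapL, pushout.map, pushout.inr_desc_assoc, Category.assoc]
      using pushout.inr _ _ ≫= pushout.condition_assoc u)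
    (by
      rw [Category.assoc, Category.assoc, hV]
      simp only [ppDomMapL, pushout.map, pushout.inl_desc_assoc, Category.assoc])
    (by
      rw [Category.assoc, Category.assoc, hV]
      simp only [ppDomMapL, pushout.map, pushout.inr_desc_assoc, Category.assoc])
    (by
      rw [Category.assoc, Category.assoc, hW]
      simp only [ppDomMapR, pushout.map, pushout.inl_desc_assoc, Category.assoc])
    (by
      rw [Category.assoc, Category.assoc, hW]
      simp only [ppDomMapR, pushout.map, pushout.inr_desc_assoc, Category.assoc])
  refine CommSq.HasLift.mk' ⟨pushout.desc l₀ l₁ hl, ?_, ?_⟩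
  · apply pushout.hom_ext
    · rw [zeta, pushout.inl_desc_assoc]
      apply pushout.hom_ext
      · rw [ppDomMapL, pushout.map, pushout.inl_desc_assoc, Category.assoc, pushout.inl_desc, hl₀a]
      · rw [ppDomMapL, pushout.map, pushout.inr_desc_assoc, Category.assoc, pushout.inr_desc, hl₁b]
    · rw [zeta, pushout.inr_desc_assoc]
      apply pushout.hom_ext
      · rw [ppDomMapR, pushout.map, pushout.inl_desc_assoc, Category.assoc, pushout.inl_desc, hl₀c]
      · rw [ppDomMapR, pushout.map, pushout.inr_desc_assoc, Category.assoc, pushout.inr_desc, hl₁d]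
  · apply pushout.hom_ext
    · rw [pushout.inl_desc_assoc, hl₀p]
    · rw [pushout.inr_desc_assoc, hl₁p]

theorem llp_zeta (T : MorphismProperty M) (h₁ : T.llp (ppMap (Arrow.mk α.left) (Arrow.mk β.left)))
    (h₂ : T.llp (ppMap (Arrow.mk α.left) (Arrow.mk (cornerMap β))))
    (h₃ : T.llp (ppMap (Arrow.mk (cornerMap α)) (Arrow.mk β.left))) :
    T.llp (zeta α β) := fun _ _ p hp =>
  have := h₁ p hp
  have := h₂ p hp
  have := h₃ p hp
  zeta_hasLiftingProperty α β p

end PushoutProduct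

theorem zeta_is_cofibration_general
    {M : Type u} [Category.{v} M] [MonoidalCategory M] [SymmetricCategory M]
    [MonoidalClosed M] [HasColimits M]
    (S : ModelStructure M) (hS : PushoutProductAxiom S)
    {fV fW fX fY : Arrow M} (α : fV ⟶ fW) (β : fX ⟶ fY) :
    (ProjCof S α → ProjCof S β → S.Cof (zeta α β)) ∧
    (ProjCof S α → ProjTrivCof S β → S.Cof (zeta α β) ∧ S.W (zeta α β)) ∧
    (ProjTrivCof S α → ProjCof S β → S.Cof (zeta α β) ∧ S.W (zeta α β)) :=
  ⟨fun hα hβ => S.cof_of_llp <| llp_zeta α β _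
      (hS.llp_trivFib hα.1 hβ.1) (hS.llp_trivFib hα.1 hβ.2) (hS.llp_trivFib hα.2 hβ.1),
    fun hα hβ => S.cof_and_w_of_llp <| llp_zeta α β _
      (hS.llp_fib_of_w_right hα.1 hβ.1.1 hβ.1.2) (hS.llp_fib_of_w_right hα.1 hβ.2.1 hβ.2.2)
      (hS.llp_fib_of_w_right hα.2 hβ.1.1 hβ.1.2),
    fun hα hβ => S.cof_and_w_of_llp <| llp_zeta α β _
      (hS.llp_fib_of_w_left hα.1.1 hα.1.2 hβ.1) (hS.llp_fib_of_w_left hα.1.1 hα.1.2 hβ.2)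
      (hS.llp_fib_of_w_left hα.2.1 hα.2.2 hβ.1)⟩

/-- (Lemma 3.3 of White–Yau.) Let `M` be a monoidal model category and let
`α : f_V ⟶ f_W`, `β : f_X ⟶ f_Y` be morphisms in the arrow category. If `α` is a
projective cofibration and `β` is a projective (trivial) cofibration, then the
`0`-component `ζ` of the pushout product `α □₂ β` is a (trivial) cofibration in `M`;
and the same with the roles reversed: if `α` is a projective (trivial) cofibration and
`β` is a projective cofibration, then `ζ` is a (trivial) cofibration. -/
theorem zeta_is_cofibration
    {M : Type u} [Category.{v} M] [MonoidalCategory M] [SymmetricCategory M]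
    [MonoidalClosed M] [HasLimits M] [HasColimits M]
    (S : ModelStructure M) (hS : PushoutProductAxiom S)
    {fV fW fX fY : Arrow M} (α : fV ⟶ fW) (β : fX ⟶ fY) :
    (ProjCof S α → ProjCof S β → S.Cof (zeta α β)) ∧
    (ProjCof S α → ProjTrivCof S β → S.Cof (zeta α β) ∧ S.W (zeta α β)) ∧
    (ProjTrivCof S α → ProjCof S β → S.Cof (zeta α β) ∧ S.W (zeta α β)) :=
  zeta_is_cofibration_general S hS α β

end ArrowPaper
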